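/- arXiv:2404.02114 — 2 statements merged into one kernel-verified Lean document; each statement's English description precedes it below -/
import Mathlib

section
/- For completely multiplicative arithmetic functions f and g, and h their Dirichlet convolution h(m) = ∑_{d|m} f(d) g(m/d), one has for every real T ≥ 1: ∑_{q ≤ T} h(q²) = ∑_{a ≤ T, a squarefree} f(a) g(a) · ∑_{b,c ≥ 1, abc ≤ T} f(b)² g(c)². -/
/-!
Every divisor `d` of `q²` is uniquely `a b²` with `a` squarefree, and then `b ∣ q`, `a ∣ q / b`,
so `q = a b c` and `q² / d = a c²`. Hence `(a, b, c) ↦ (a b c, a b²)` parametrizes the pairs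
`(q, d)` with `d ∣ q²`, and complete multiplicativity turns `f(a b²) g(a c²)` into
`f(a) g(a) f(b)² g(c)²`.
-/

open Finset

namespace Nat

theorem mul_sq_inj_of_squarefree {a₁ b₁ a₂ b₂ : ℕ} (ha₁ : Squarefree a₁) (ha₂ : Squarefree a₂)
    (hb₁ : b₁ ≠ 0) (hb₂ : b₂ ≠ 0) (h : a₁ * b₁ ^ 2 = a₂ * b₂ ^ 2) : a₁ = a₂ ∧ b₁ = b₂ := by
  have ha : a₁ = a₂ := by
    refine Nat.factorization_inj ha₁.ne_zero ha₂.ne_zero (Finsupp.ext fun p => ?_)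
    have e := congrArg (·.factorization p) h
    simp only [Nat.factorization_mul ha₁.ne_zero (pow_ne_zero 2 hb₁),
      Nat.factorization_mul ha₂.ne_zero (pow_ne_zero 2 hb₂), Nat.factorization_pow,
      Finsupp.add_apply, Finsupp.smul_apply, smul_eq_mul] at e
    have := ha₁.natFactorization_le_one p
    have := ha₂.natFactorization_le_one p
    omega
  subst ha
  exact ⟨rfl, Nat.pow_left_injective two_ne_zero
    (Nat.eq_of_mul_eq_mul_left (Nat.pos_of_ne_zero ha₁.ne_zero) h)⟩

theorem exists_squarefree_mul_mul_of_dvd_sq {q d : ℕ} (hq : q ≠ 0) (hd : d ∣ q ^ 2) :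
    ∃ a b c, Squarefree a ∧ a * b * c = q ∧ a * b ^ 2 = d := by
  obtain ⟨a, b, rfl, ha⟩ := Nat.sq_mul_squarefree d
  obtain ⟨m, rfl⟩ : b ∣ q :=
    (Nat.pow_dvd_pow_iff two_ne_zero).mp (dvd_trans (Dvd.intro a rfl) hd)
  have hb : b ≠ 0 := left_ne_zero_of_mul hq
  have ham : a ∣ m ^ 2 := by
    rw [← mul_dvd_mul_iff_left (pow_ne_zero 2 hb), ← mul_pow]
    exact hd
  obtain ⟨c, rfl⟩ := (ha.dvd_pow_iff_dvd two_ne_zero).mp ham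
  exact ⟨a, b, c, ha, by ring, by ring⟩

theorem sum_Icc_sum_divisors_sq {M : Type*} [AddCommMonoid M] (N : ℕ) (F : ℕ → ℕ → M) :
    ∑ q ∈ Icc 1 N, ∑ d ∈ (q ^ 2).divisors, F d (q ^ 2 / d)
      = ∑ a ∈ (Icc 1 N).filter Squarefree,
          ∑ p ∈ (Icc 1 N ×ˢ Icc 1 N).filter (fun p => a * p.1 * p.2 ≤ N),
            F (a * p.1 ^ 2) (a * p.2 ^ 2) := by
  rw [sum_sigma', sum_sigma']
  refine (sum_bij (fun x _ => (⟨x.1 * x.2.1 * x.2.2, x.1 * x.2.1 ^ 2⟩ : Σ _ : ℕ, ℕ))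
    ?_ ?_ ?_ ?_).symm
  · rintro ⟨a, b, c⟩ hx
    simp only [mem_sigma, mem_filter, mem_Icc, mem_product, Nat.mem_divisors] at hx ⊢
    obtain ⟨⟨⟨ha, -⟩, -⟩, ⟨⟨hb, -⟩, hc, -⟩, habc⟩ := hx
    exact ⟨⟨Nat.one_le_iff_ne_zero.2 (by positivity), habc⟩,
      ⟨a * c ^ 2, by ring⟩, by positivity⟩
  · rintro ⟨a₁, b₁, c₁⟩ hx₁ ⟨a₂, b₂, c₂⟩ hx₂ he
    simp only [mem_sigma, mem_filter, mem_Icc, mem_product] at hx₁ hx₂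
    simp only [Sigma.mk.inj_iff, heq_eq_eq] at he
    obtain ⟨rfl, rfl⟩ := mul_sq_inj_of_squarefree hx₁.1.2 hx₂.1.2 (by omega) (by omega) he.2
    obtain rfl := Nat.eq_of_mul_eq_mul_left (by nlinarith) he.1
    rfl
  · rintro ⟨q, d⟩ hy
    simp only [mem_sigma, mem_Icc, Nat.mem_divisors] at hy
    obtain ⟨⟨hq, hqN⟩, hd, -⟩ := hy
    obtain ⟨a, b, c, ha, rfl, rfl⟩ := exists_squarefree_mul_mul_of_dvd_sq (by omega) hd
    obtain ⟨⟨ha0, hb0⟩, hc0⟩ : (a ≠ 0 ∧ b ≠ 0) ∧ c ≠ 0 := by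
      simpa only [Nat.mul_ne_zero_iff] using (by omega : a * b * c ≠ 0)
    have : a ≤ a * b * c := Nat.le_of_dvd hq ⟨b * c, by ring⟩
    have : b ≤ a * b * c := Nat.le_of_dvd hq ⟨a * c, by ring⟩
    have : c ≤ a * b * c := Nat.le_of_dvd hq ⟨a * b, by ring⟩
    refine ⟨⟨a, b, c⟩, ?_, rfl⟩
    simp only [mem_sigma, mem_filter, mem_Icc, mem_product]
    exact ⟨⟨⟨by omega, by omega⟩, ha⟩, ⟨⟨by omega, by omega⟩, by omega, by omega⟩, hqN⟩
  · rintro ⟨a, b, c⟩ hx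
    simp only [mem_sigma, mem_filter, mem_Icc, mem_product] at hx
    obtain ⟨⟨⟨ha, -⟩, -⟩, ⟨⟨hb, -⟩, -⟩, -⟩ := hx
    have hq : (a * b * c) ^ 2 = a * b ^ 2 * (a * c ^ 2) := by ring
    rw [hq, Nat.mul_div_cancel_left _ (by positivity)]

end Nat

theorem sum_squares_of_dirichlet_convolution_general
    (f g : ℕ → ℂ)
    (hf : ∀ m n : ℕ, f (m * n) = f m * f n)
    (hg : ∀ m n : ℕ, g (m * n) = g m * g n)
    (h : ℕ → ℂ) (hh : ∀ m : ℕ, h m = ∑ d ∈ m.divisors, f d * g (m / d))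
    (T : ℝ) :
    ∑ q ∈ Icc 1 ⌊T⌋₊, h (q ^ 2)
      = ∑ a ∈ (Icc 1 ⌊T⌋₊).filter Squarefree,
          f a * g a *
            ∑ p ∈ (Icc 1 ⌊T⌋₊ ×ˢ Icc 1 ⌊T⌋₊).filter
                (fun p => ((a * p.1 * p.2 : ℕ) : ℝ) ≤ T),
              f p.1 ^ 2 * g p.2 ^ 2 := by
  simp only [hh]
  rw [Nat.sum_Icc_sum_divisors_sq _ fun d e => f d * g e]
  refine sum_congr rfl fun a ha => ?_
  rw [mul_sum]
  refine sum_congr (filter_congr fun p hp => ?_) fun p _ => ?_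
  · simp only [mem_filter, mem_Icc, mem_product] at ha hp
    exact Nat.le_floor_iff' (by have := ha.1.1; have := hp.1.1; have := hp.2.1; positivity)
  · rw [hf, hg, sq, hf, sq, hg]
    ring

/-- For completely multiplicative `f, g` with Dirichlet convolution `h`,
`∑_{q ≤ T} h(q²) = ∑_{a ≤ T squarefree} f(a)g(a) ∑_{abc ≤ T} f(b)²g(c)²`. -/
theorem sum_squares_of_dirichlet_convolution
    (f g : ℕ → ℂ)
    (hf1 : f 1 = 1) (hf : ∀ m n : ℕ, f (m * n) = f m * f n)
    (hg1 : g 1 = 1) (hg : ∀ m n : ℕ, g (m * n) = g m * g n)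
    (h : ℕ → ℂ) (hh : ∀ m : ℕ, h m = ∑ d ∈ m.divisors, f d * g (m / d))
    (T : ℝ) (hT : 1 ≤ T) :
    ∑ q ∈ Icc 1 ⌊T⌋₊, h (q ^ 2)
      = ∑ a ∈ (Icc 1 ⌊T⌋₊).filter Squarefree,
          f a * g a *
            ∑ p ∈ (Icc 1 ⌊T⌋₊ ×ˢ Icc 1 ⌊T⌋₊).filter
                (fun p => ((a * p.1 * p.2 : ℕ) : ℝ) ≤ T),
              f p.1 ^ 2 * g p.2 ^ 2 :=
  sum_squares_of_dirichlet_convolution_general f g hf hg h hh T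
end

section
/- Let χ₁, χ₂ be Dirichlet characters with χ₁ not real-valued (i.e., χ₁² is not principal), and k ≥ 2 an integer. Then ∑_{q ≤ T} σ_k(χ₁,χ₂,q²) = O(T^{2k}) as T → ∞, where σ_k(χ₁,χ₂,n) = ∑_{d|n} χ₁(d) χ₂(n/d) d^k. -/
/-!
Write a divisor `d` of `q²` as `d = u m²` with `u` squarefree; then `u m ∣ q`, say `q = u v m`,
and `(u, v, m)` is unique. The sum over `q ≤ T` becomes
`∑_{u squarefree, v} χ₁(u) χ₂(u v²) u^k ∑_{m ≤ T/(uv)} χ₁²(m) m^{2k}`.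
As `χ₁²` is non-principal its partial sums are bounded by the modulus, so by partial summation
the inner sum is `O((T/(uv))^{2k})`, and `∑ u^{-k} v^{-2k}` converges because `k ≥ 2`.
-/

open Finset

theorem Nat.mul_dvd_of_squarefree_of_mul_sq_dvd_sq {u m q : ℕ} (hu : Squarefree u)
    (h : u * m ^ 2 ∣ q ^ 2) : u * m ∣ q := by
  obtain ⟨t, rfl⟩ : m ∣ q :=
    (Nat.pow_dvd_pow_iff two_ne_zero).mp (dvd_trans (dvd_mul_left _ _) h)
  rcases eq_or_ne m 0 with rfl | hm
  · simp
  have hut : u ∣ t := by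
    rw [← hu.dvd_pow_iff_dvd two_ne_zero]
    rw [mul_pow, mul_comm u] at h
    exact (mul_dvd_mul_iff_left (pow_ne_zero 2 hm)).mp h
  rw [mul_comm m]
  exact mul_dvd_mul_right hut m

theorem Nat.eq_of_squarefree_mul_sq_eq {u₁ u₂ m₁ m₂ : ℕ} (hu₁ : Squarefree u₁)
    (hu₂ : Squarefree u₂) (hm₁ : m₁ ≠ 0) (h : u₁ * m₁ ^ 2 = u₂ * m₂ ^ 2) :
    u₁ = u₂ ∧ m₁ = m₂ := by
  have hm₂ : m₂ ≠ 0 := by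
    rintro rfl
    simp [hu₁.ne_zero, hm₁] at h
  -- `u` squarefree means `v_p(u) ≤ 1`, which pins `v_p(m)` down as `⌊v_p(u m²) / 2⌋`.
  have hm : m₁ = m₂ := by
    refine Nat.eq_of_factorization_eq hm₁ hm₂ fun p => ?_
    have hfac := congr_arg (Nat.factorization · p) h
    simp only [Nat.factorization_mul hu₁.ne_zero (pow_ne_zero 2 hm₁),
      Nat.factorization_mul hu₂.ne_zero (pow_ne_zero 2 hm₂), Nat.factorization_pow,
      Finsupp.add_apply, Finsupp.smul_apply, smul_eq_mul] at hfac
    have h₁ := (Nat.squarefree_iff_factorization_le_one hu₁.ne_zero).mp hu₁ p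
    have h₂ := (Nat.squarefree_iff_factorization_le_one hu₂.ne_zero).mp hu₂ p
    omega
  subst hm
  exact ⟨Nat.eq_of_mul_eq_mul_right (by positivity) h, rfl⟩

theorem sum_Icc_sum_divisors_sq_eq_sum_squarefree {M : Type*} [AddCommMonoid M] (n : ℕ)
    (F : ℕ → ℕ → M) :
    ∑ q ∈ Icc 1 n, ∑ d ∈ (q ^ 2).divisors, F q d =
      ∑ u ∈ Icc 1 n with Squarefree u, ∑ v ∈ Icc 1 n, ∑ m ∈ Icc 1 (n / (u * v)),
        F (u * v * m) (u * m ^ 2) := by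
  have mem_triples {u v m : ℕ} : (⟨u, v, m⟩ : (_ : ℕ) × (_ : ℕ) × ℕ) ∈
      ({u ∈ Icc 1 n | Squarefree u}.sigma fun u => (Icc 1 n).sigma fun v => Icc 1 (n / (u * v)))
      ↔ Squarefree u ∧ 0 < u ∧ 0 < v ∧ 0 < m ∧ u * v * m ≤ n := by
    simp only [mem_sigma, mem_filter, mem_Icc]
    constructor
    · rintro ⟨⟨⟨hu, -⟩, hsq⟩, ⟨hv, -⟩, hm, hmn⟩
      exact ⟨hsq, hu, hv, hm, by rwa [mul_comm, ← Nat.le_div_iff_mul_le (by positivity)]⟩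
    · rintro ⟨hsq, hu, hv, hm, h⟩
      refine ⟨⟨⟨hu, ?_⟩, hsq⟩, ⟨hv, ?_⟩, hm, ?_⟩
      · nlinarith [Nat.le_mul_of_pos_right u hv]
      · nlinarith [Nat.le_mul_of_pos_left v hu]
      · rwa [Nat.le_div_iff_mul_le (by positivity), mul_comm]
  simp_rw [Finset.sum_sigma']
  symm
  refine Finset.sum_bij (fun x _ => ⟨x.1 * x.2.1 * x.2.2, x.1 * x.2.2 ^ 2⟩) ?_ ?_ ?_
    (fun _ _ => rfl)
  · rintro ⟨u, v, m⟩ hx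
    obtain ⟨-, hu, hv, hm, h⟩ := mem_triples.mp hx
    simp only [mem_sigma, mem_Icc, Nat.mem_divisors]
    exact ⟨⟨Nat.mul_pos (Nat.mul_pos hu hv) hm, h⟩, ⟨u * v ^ 2, by ring⟩, by positivity⟩
  · rintro ⟨u₁, v₁, m₁⟩ hx₁ ⟨u₂, v₂, m₂⟩ hx₂ h
    obtain ⟨hsq₁, hu₁, hv₁, hm₁, -⟩ := mem_triples.mp hx₁
    obtain ⟨hsq₂, -, -, -, -⟩ := mem_triples.mp hx₂
    simp only [Sigma.mk.injEq, heq_eq_eq] at h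
    obtain ⟨rfl, rfl⟩ := Nat.eq_of_squarefree_mul_sq_eq hsq₁ hsq₂ hm₁.ne' h.2
    obtain rfl : v₁ = v₂ := Nat.eq_of_mul_eq_mul_left hu₁ (Nat.eq_of_mul_eq_mul_right hm₁ h.1)
    rfl
  · rintro ⟨q, d⟩ hx
    simp only [mem_sigma, mem_Icc, Nat.mem_divisors] at hx
    obtain ⟨⟨hq, hqn⟩, hdq, -⟩ := hx
    obtain ⟨u, m, hum, hsq⟩ := Nat.sq_mul_squarefree d
    rw [← hum, mul_comm] at hdq
    obtain ⟨v, rfl⟩ := Nat.mul_dvd_of_squarefree_of_mul_sq_dvd_sq hsq hdq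
    have hq' : u * m * v = u * v * m := by ring
    rw [hq'] at hq hqn
    refine ⟨⟨u, v, m⟩, mem_triples.mpr ⟨hsq, ?_⟩, ?_⟩
    · replace hq : 0 < u * v * m := hq
      simp only [CanonicallyOrderedAdd.mul_pos] at hq
      exact ⟨hq.1.1, hq.1.2, hq.2, hqn⟩
    · rw [← hum, hq']
      exact Sigma.ext rfl (heq_of_eq (mul_comm _ _))

theorem MulChar.sq_ne_one_of_im_ne_zero {R : Type*} [CommMonoid R] {χ : MulChar R ℂ} {a : R}
    (ha : (χ a).im ≠ 0) : χ ^ 2 ≠ 1 := by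
  intro h
  by_cases hu : IsUnit a
  · have hsq : χ a ^ 2 = 1 := by rw [← χ.pow_apply' two_ne_zero, h, MulChar.one_apply hu]
    rcases sq_eq_one_iff.mp hsq with h₁ | h₁ <;> simp [h₁] at ha
  · exact ha (by rw [χ.map_nonunit hu, Complex.zero_im])

theorem DirichletCharacter.sq_eq_one_of_level_zero (χ : DirichletCharacter ℂ 0) : χ ^ 2 = 1 := by
  ext a
  rw [MulChar.pow_apply' χ two_ne_zero, ← map_pow, ← Units.val_pow_eq_pow_val,
    show a ^ 2 = 1 from Int.units_sq a]
  simp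

theorem norm_sum_range_le_of_periodic {E : Type*} [SeminormedAddCommGroup E] {f : ℕ → E}
    {N : ℕ} (hN : 0 < N) (hf : Function.Periodic f N) (hsum : ∑ m ∈ range N, f m = 0)
    {C : ℝ} (hC : ∀ m, ‖f m‖ ≤ C) (j : ℕ) : ‖∑ m ∈ range j, f m‖ ≤ N * C := by
  induction j using Nat.strong_induction_on with
  | _ j ih =>
    rcases lt_or_ge j N with hj | hj
    · calc ‖∑ m ∈ range j, f m‖ ≤ ∑ m ∈ range j, C := norm_sum_le_of_le _ fun m _ => hC m
        _ = j * C := by simp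
        _ ≤ N * C := by gcongr; exact (norm_nonneg _).trans (hC 0)
    · obtain ⟨i, rfl⟩ := Nat.exists_eq_add_of_le hj
      rw [sum_range_add, hsum, zero_add]
      rw [sum_congr rfl fun x _ => (congrArg f (add_comm N x)).trans (hf x)]
      exact ih i (by omega)

theorem norm_sum_range_succ_smul_le_of_monotone {E : Type*} [SeminormedAddCommGroup E]
    [NormedSpace ℝ E] {a : ℕ → E} {B : ℝ} (ha : ∀ j, ‖∑ m ∈ range j, a m‖ ≤ B) {f : ℕ → ℝ}
    (hf : Monotone f) (hf₀ : 0 ≤ f 0) (M : ℕ) :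
    ‖∑ m ∈ range (M + 1), f m • a m‖ ≤ 2 * B * f M := by
  have hB : 0 ≤ B := (norm_nonneg _).trans (ha 0)
  have hfM : 0 ≤ f M := hf₀.trans (hf (Nat.zero_le _))
  rw [sum_range_by_parts, Nat.add_sub_cancel]
  calc ‖f M • ∑ m ∈ range (M + 1), a m -
        ∑ i ∈ range M, (f (i + 1) - f i) • ∑ m ∈ range (i + 1), a m‖
      ≤ f M * B + ∑ i ∈ range M, (f (i + 1) - f i) * B := by
        refine (norm_sub_le _ _).trans (add_le_add ?_ ((norm_sum_le _ _).trans ?_))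
        · rw [norm_smul, Real.norm_of_nonneg hfM]
          exact mul_le_mul_of_nonneg_left (ha _) hfM
        · refine sum_le_sum fun i _ => ?_
          have hfi : 0 ≤ f (i + 1) - f i := sub_nonneg.mpr (hf (Nat.le_succ i))
          rw [norm_smul, Real.norm_of_nonneg hfi]
          exact mul_le_mul_of_nonneg_left (ha _) hfi
    _ = (2 * f M - f 0) * B := by rw [← sum_mul, sum_range_sub]; ring
    _ ≤ 2 * B * f M := by nlinarith

theorem ZMod.sum_range_natCast {M : Type*} [AddCommMonoid M] (N : ℕ) [NeZero N]
    (g : ZMod N → M) : ∑ m ∈ range N, g m = ∑ z, g z :=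
  Finset.sum_nbij' (fun m => (m : ZMod N)) ZMod.val (by simp) (by simp [ZMod.val_lt])
    (fun m hm => by simp [ZMod.val_natCast, Nat.mod_eq_of_lt (mem_range.mp hm)]) (by simp)
    (by simp)

namespace DirichletCharacter

variable {N : ℕ} [NeZero N] {χ : DirichletCharacter ℂ N}

theorem norm_sum_range_le (hχ : χ ≠ 1) (j : ℕ) : ‖∑ m ∈ range j, χ m‖ ≤ N := by
  have hper : Function.Periodic (fun m : ℕ => χ m) N := fun m => by simp
  have hsum : ∑ m ∈ range N, χ m = 0 := by
    rw [ZMod.sum_range_natCast N χ, MulChar.sum_eq_zero_of_ne_one hχ]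
  simpa using
    norm_sum_range_le_of_periodic (NeZero.pos N) hper hsum (fun m => χ.norm_le_one m) j

theorem norm_sum_Icc_mul_pow_le (hχ : χ ≠ 1) {K : ℕ} (hK : K ≠ 0) (M : ℕ) :
    ‖∑ m ∈ Icc 1 M, χ m * (m : ℂ) ^ K‖ ≤ 2 * N * (M : ℝ) ^ K := by
  have hmono : Monotone fun m : ℕ => (m : ℝ) ^ K := fun a b hab =>
    pow_le_pow_left₀ (Nat.cast_nonneg a) (Nat.cast_le.mpr hab) K
  have hrange : ∑ m ∈ Icc 1 M, χ m * (m : ℂ) ^ K =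
      ∑ m ∈ range (M + 1), ((m : ℝ) ^ K) • χ m := by
    rw [Nat.range_succ_eq_Icc_zero, ← insert_Icc_add_one_left_eq_Icc (Nat.zero_le M),
      sum_insert (by simp), zero_add]
    simp only [Nat.cast_zero, zero_pow hK, zero_smul, zero_add, Complex.real_smul]
    push_cast
    exact sum_congr rfl fun m _ => mul_comm _ _
  rw [hrange]
  exact norm_sum_range_succ_smul_le_of_monotone (norm_sum_range_le hχ) hmono (by simp) M

end DirichletCharacter

noncomputable def twistedSigma {N₁ N₂ : ℕ} (k : ℕ) (χ₁ : DirichletCharacter ℂ N₁)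
    (χ₂ : DirichletCharacter ℂ N₂) (n : ℕ) : ℂ :=
  ∑ d ∈ n.divisors, χ₁ (d : ZMod N₁) * χ₂ ((n / d : ℕ) : ZMod N₂) * (d : ℂ) ^ k

section TwistedSigma

variable {N₁ N₂ : ℕ} [NeZero N₁] {χ₁ : DirichletCharacter ℂ N₁} (χ₂ : DirichletCharacter ℂ N₂)
  {k : ℕ}

theorem norm_sum_Icc_divisor_fiber_le (hχ : χ₁ ^ 2 ≠ 1) (hk : k ≠ 0) (n : ℕ) {u v : ℕ}
    (hu : 0 < u) (hv : 0 < v) :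
    ‖∑ m ∈ Icc 1 (n / (u * v)), χ₁ ((u * m ^ 2 : ℕ) : ZMod N₁) *
        χ₂ (((u * v * m) ^ 2 / (u * m ^ 2) : ℕ) : ZMod N₂) * ((u * m ^ 2 : ℕ) : ℂ) ^ k‖
      ≤ 2 * N₁ * (n : ℝ) ^ (2 * k) * ((u : ℝ) ^ k)⁻¹ * ((v : ℝ) ^ (2 * k))⁻¹ := by
  set C := χ₁ (u : ZMod N₁) * χ₂ ((u * v ^ 2 : ℕ) : ZMod N₂) * (u : ℂ) ^ k
  have hterm : ∀ m ∈ Icc 1 (n / (u * v)), χ₁ ((u * m ^ 2 : ℕ) : ZMod N₁) *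
      χ₂ (((u * v * m) ^ 2 / (u * m ^ 2) : ℕ) : ZMod N₂) * ((u * m ^ 2 : ℕ) : ℂ) ^ k =
      C * ((χ₁ ^ 2) (m : ZMod N₁) * (m : ℂ) ^ (2 * k)) := fun m hm => by
    have hm : 0 < m := (mem_Icc.mp hm).1
    have hquot : (u * v * m) ^ 2 / (u * m ^ 2) = u * v ^ 2 :=
      Nat.div_eq_of_eq_mul_left (by positivity) (by ring)
    rw [hquot, χ₁.pow_apply' two_ne_zero]
    simp only [C, Nat.cast_mul, Nat.cast_pow, map_mul, map_pow]
    ring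
  have hC : ‖C‖ ≤ (u : ℝ) ^ k :=
    calc ‖C‖ = ‖χ₁ (u : ZMod N₁)‖ * ‖χ₂ ((u * v ^ 2 : ℕ) : ZMod N₂)‖ * (u : ℝ) ^ k := by
          simp [C]
      _ ≤ 1 * 1 * (u : ℝ) ^ k := by gcongr <;> exact DirichletCharacter.norm_le_one _ _
      _ = (u : ℝ) ^ k := by ring
  have hdiv : ((n / (u * v) : ℕ) : ℝ) ≤ n / (u * v) := by exact_mod_cast Nat.cast_div_le
  rw [sum_congr rfl hterm, ← mul_sum, norm_mul]
  calc ‖C‖ * ‖∑ m ∈ Icc 1 (n / (u * v)), (χ₁ ^ 2) (m : ZMod N₁) * (m : ℂ) ^ (2 * k)‖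
      ≤ (u : ℝ) ^ k * (2 * N₁ * ((n / (u * v) : ℕ) : ℝ) ^ (2 * k)) :=
        mul_le_mul hC (DirichletCharacter.norm_sum_Icc_mul_pow_le hχ (by omega) _)
          (norm_nonneg _) (by positivity)
    _ ≤ (u : ℝ) ^ k * (2 * N₁ * (n / (u * v)) ^ (2 * k)) := by gcongr
    _ = 2 * N₁ * (n : ℝ) ^ (2 * k) * ((u : ℝ) ^ k)⁻¹ * ((v : ℝ) ^ (2 * k))⁻¹ := by
        rw [div_pow, mul_pow]
        field_simp
        ring

theorem norm_sum_twistedSigma_sq_le (hχ : χ₁ ^ 2 ≠ 1) (hk : 2 ≤ k) (n : ℕ) :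
    ‖∑ q ∈ Icc 1 n, twistedSigma k χ₁ χ₂ (q ^ 2)‖ ≤
      2 * N₁ * (∑' u : ℕ, ((u : ℝ) ^ k)⁻¹) * (∑' v : ℕ, ((v : ℝ) ^ (2 * k))⁻¹) *
        (n : ℝ) ^ (2 * k) := by
  have hζ : ∀ {p : ℕ}, 2 ≤ p → ∑ u ∈ Icc 1 n, ((u : ℝ) ^ p)⁻¹ ≤ ∑' u : ℕ, ((u : ℝ) ^ p)⁻¹ :=
    fun hp => Summable.sum_le_tsum _ (fun _ _ => by positivity) (Real.summable_nat_pow_inv.mpr hp)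
  simp only [twistedSigma]
  rw [sum_Icc_sum_divisors_sq_eq_sum_squarefree]
  calc _ ≤ ∑ u ∈ Icc 1 n with Squarefree u, ∑ v ∈ Icc 1 n,
          2 * N₁ * (n : ℝ) ^ (2 * k) * ((u : ℝ) ^ k)⁻¹ * ((v : ℝ) ^ (2 * k))⁻¹ := by
        refine norm_sum_le_of_le _ fun u hu => norm_sum_le_of_le _ fun v hv => ?_
        exact norm_sum_Icc_divisor_fiber_le χ₂ hχ (by omega) n (mem_Icc.mp (mem_filter.mp hu).1).1
          (mem_Icc.mp hv).1
    _ ≤ ∑ u ∈ Icc 1 n, ∑ v ∈ Icc 1 n,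
          2 * N₁ * (n : ℝ) ^ (2 * k) * ((u : ℝ) ^ k)⁻¹ * ((v : ℝ) ^ (2 * k))⁻¹ :=
        sum_le_sum_of_subset_of_nonneg (filter_subset _ _) fun _ _ _ => by positivity
    _ = 2 * N₁ * (∑ u ∈ Icc 1 n, ((u : ℝ) ^ k)⁻¹) * (∑ v ∈ Icc 1 n, ((v : ℝ) ^ (2 * k))⁻¹) *
          (n : ℝ) ^ (2 * k) := by
        simp_rw [mul_sum, sum_mul]
        exact sum_comm.trans (sum_congr rfl fun _ _ => sum_congr rfl fun _ _ => by ring)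
    _ ≤ _ := by gcongr <;> exact hζ (by omega)

end TwistedSigma

/-- For Dirichlet characters with `χ₁` not real-valued and `k ≥ 2`,
`∑_{q ≤ T} σ_k(χ₁,χ₂,q²) = O(T^{2k})`. -/
theorem twisted_divisor_sum_bound_nonreal (N₁ N₂ : ℕ)
    (χ₁ : DirichletCharacter ℂ N₁) (χ₂ : DirichletCharacter ℂ N₂)
    (hnonreal : ∃ n : ℕ, (χ₁ (n : ZMod N₁)).im ≠ 0)
    (k : ℕ) (hk : 2 ≤ k) :
    (fun T : ℝ =>
      ∑ q ∈ Icc 1 ⌊T⌋₊, ∑ d ∈ (q ^ 2).divisors,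
        χ₁ (d : ZMod N₁) * χ₂ ((q ^ 2 / d : ℕ) : ZMod N₂) * (d : ℂ) ^ k)
      =O[Filter.atTop] fun T : ℝ => T ^ (2 * k) := by
  obtain ⟨n₀, hn₀⟩ := hnonreal
  have hχ : χ₁ ^ 2 ≠ 1 := MulChar.sq_ne_one_of_im_ne_zero hn₀
  have : NeZero N₁ := ⟨by rintro rfl; exact hχ χ₁.sq_eq_one_of_level_zero⟩
  refine .of_bound (2 * N₁ * (∑' u : ℕ, ((u : ℝ) ^ k)⁻¹) * ∑' v : ℕ, ((v : ℝ) ^ (2 * k))⁻¹) ?_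
  filter_upwards [Filter.eventually_ge_atTop 0] with T hT
  refine (norm_sum_twistedSigma_sq_le χ₂ hχ hk ⌊T⌋₊).trans ?_
  rw [Real.norm_of_nonneg (by positivity)]
  gcongr
  exact Nat.floor_le hT
end
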